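/- (Frobenius-norm projection onto the PSD cone is the positive spectral part.) Let V be a real symmetric n × n matrix, and let V = Σ_{i=1}^n λ_i v_i v_iᵀ be a spectral decomposition of V, where λ_1, …, λ_n are the eigenvalues of V and v_1, …, v_n form an orthonormal basis of eigenvectors. Define V₊ = Σ_{i=1}^n max(λ_i, 0) v_i v_iᵀ. Then V₊ is positive semidefinite, and it is the unique minimizer of the function X ↦ ‖X − V‖_F over all real symmetric positive semidefinite n × n matrices X; that is, ‖V₊ − V‖_F < ‖X − V‖_F for every real symmetric positive semidefinite X ≠ V₊. -/

import Mathlib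

/-!
With `⟨A, B⟩ = tr(AᵀB)`, the gap `V₊ - V = Σ (λᵢ⁺ - λᵢ) vᵢvᵢᵀ` has nonnegative coefficients, so
`⟨X, V₊ - V⟩ = Σ (λᵢ⁺ - λᵢ) vᵢᵀXvᵢ ≥ 0` for PSD `X`, while `⟨V₊, V₊ - V⟩ = Σ λᵢ⁺ (λᵢ⁺ - λᵢ) = 0`
by orthonormality. Hence `⟨X - V₊, V₊ - V⟩ ≥ 0`, and expanding `X - V = (X - V₊) + (V₊ - V)` gives
`‖X - V‖² ≥ ‖V₊ - V‖² + ‖X - V₊‖²`, which is strict when `X ≠ V₊`.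
-/

open Matrix

section

variable {ι n R : Type*} [Fintype ι] [Fintype n]

theorem Matrix.trace_transpose_mul_vecMulVec_self [CommSemiring R] (A : Matrix n n R)
    (w : n → R) : trace (Aᵀ * vecMulVec w w) = w ⬝ᵥ A *ᵥ w := by
  rw [mul_vecMulVec, trace_vecMulVec, mulVec_transpose, ← dotProduct_mulVec]

theorem Matrix.trace_transpose_mul_sum_smul_vecMulVec [CommSemiring R] (A : Matrix n n R)
    (d : ι → R) (v : ι → n → R) :
    trace (Aᵀ * ∑ i, d i • vecMulVec (v i) (v i)) = ∑ i, d i * (v i ⬝ᵥ A *ᵥ v i) := by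
  simp only [Finset.mul_sum, Matrix.mul_smul, trace_sum, trace_smul,
    trace_transpose_mul_vecMulVec_self, smul_eq_mul]

theorem Matrix.trace_transpose_add_mul_self_add [CommRing R] (A B : Matrix n n R) :
    trace ((A + B)ᵀ * (A + B)) = trace (Aᵀ * A) + 2 * trace (Aᵀ * B) + trace (Bᵀ * B) := by
  have hBA : trace (Bᵀ * A) = trace (Aᵀ * B) := by
    rw [← trace_transpose, transpose_mul, transpose_transpose]
  rw [transpose_add, add_mul, mul_add, mul_add, trace_add, trace_add, trace_add, hBA]
  ring

theorem Matrix.trace_transpose_mul_self_sub_add_le_of_nonneg {X P V : Matrix n n ℝ}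
    (h : 0 ≤ trace ((X - P)ᵀ * (P - V))) :
    trace ((P - V)ᵀ * (P - V)) + trace ((X - P)ᵀ * (X - P)) ≤ trace ((X - V)ᵀ * (X - V)) := by
  have hexp := trace_transpose_add_mul_self_add (X - P) (P - V)
  rw [sub_add_sub_cancel] at hexp
  linarith

theorem Matrix.trace_transpose_mul_self_nonneg (A : Matrix n n ℝ) : 0 ≤ trace (Aᵀ * A) := by
  simpa using (posSemidef_conjTranspose_mul_self A).trace_nonneg

theorem Matrix.trace_transpose_mul_self_pos {A : Matrix n n ℝ} (hA : A ≠ 0) :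
    0 < trace (Aᵀ * A) :=
  (trace_transpose_mul_self_nonneg A).lt_of_ne' <| by
    simpa using trace_conjTranspose_mul_self_eq_zero_iff.not.mpr hA

theorem Matrix.posSemidef_sum_smul_vecMulVec_self {c : ι → ℝ} (hc : ∀ i, 0 ≤ c i)
    (v : ι → n → ℝ) : (∑ i, c i • vecMulVec (v i) (v i)).PosSemidef :=
  posSemidef_sum _ fun i _ => by
    simpa using (posSemidef_vecMulVec_self_star (v i)).smul (hc i)

variable [DecidableEq ι] [CommSemiring R] {v : ι → n → R}
  (horth : ∀ i j, v i ⬝ᵥ v j = if i = j then (1 : R) else 0)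
include horth

theorem Matrix.dotProduct_sum_smul_vecMulVec_mulVec (c : ι → R) (j : ι) :
    v j ⬝ᵥ (∑ i, c i • vecMulVec (v i) (v i)) *ᵥ v j = c j := by
  simp [sum_mulVec, smul_mulVec, vecMulVec_mulVec, horth]

theorem Matrix.trace_transpose_sum_smul_vecMulVec_mul (c d : ι → R) :
    trace ((∑ i, c i • vecMulVec (v i) (v i))ᵀ * ∑ i, d i • vecMulVec (v i) (v i)) =
      ∑ i, d i * c i := by
  simp only [trace_transpose_mul_sum_smul_vecMulVec, dotProduct_sum_smul_vecMulVec_mulVec horth]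

end

theorem psd_projection_positive_spectral_part_general {n : ℕ}
    (V : Matrix (Fin n) (Fin n) ℝ)
    (lam : Fin n → ℝ) (v : Fin n → (Fin n → ℝ))
    (horth : ∀ i j, v i ⬝ᵥ v j = if i = j then (1 : ℝ) else 0)
    (hdecomp : V = ∑ i, lam i • Matrix.vecMulVec (v i) (v i))
    (Vplus : Matrix (Fin n) (Fin n) ℝ)
    (hVplus : Vplus = ∑ i, max (lam i) 0 • Matrix.vecMulVec (v i) (v i)) :
    Vplus.PosSemidef ∧
      ∀ X : Matrix (Fin n) (Fin n) ℝ, X.PosSemidef → X ≠ Vplus →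
        Real.sqrt (Matrix.trace ((Vplus - V)ᵀ * (Vplus - V))) <
          Real.sqrt (Matrix.trace ((X - V)ᵀ * (X - V))) := by
  have hgap : Vplus - V = ∑ i, (max (lam i) 0 - lam i) • vecMulVec (v i) (v i) := by
    simp only [hVplus, hdecomp, sub_smul, Finset.sum_sub_distrib]
  have hgap_nonneg (i : Fin n) : 0 ≤ max (lam i) 0 - lam i := sub_nonneg.mpr (le_max_left _ _)
  refine ⟨hVplus ▸ posSemidef_sum_smul_vecMulVec_self (fun i => le_max_right _ _) v,
    fun X hX hne => ?_⟩
  have hobtuse : 0 ≤ trace ((X - Vplus)ᵀ * (Vplus - V)) := by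
    have hcomp (i : Fin n) : (max (lam i) 0 - lam i) * max (lam i) 0 = 0 := by
      rcases le_total (lam i) 0 with h | h <;> simp [h]
    rw [transpose_sub, Matrix.sub_mul, trace_sub, hgap, trace_transpose_mul_sum_smul_vecMulVec,
      hVplus, trace_transpose_sum_smul_vecMulVec_mul horth]
    simp only [hcomp, Finset.sum_const_zero, sub_zero]
    exact Finset.sum_nonneg fun i _ => mul_nonneg (hgap_nonneg i) (hX.dotProduct_mulVec_nonneg _)
  refine Real.sqrt_lt_sqrt (trace_transpose_mul_self_nonneg _) ?_
  linarith [trace_transpose_mul_self_sub_add_le_of_nonneg hobtuse,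
    trace_transpose_mul_self_pos (sub_ne_zero.mpr hne)]

/-- **Frobenius-norm projection onto the PSD cone is the positive
spectral part.**  If `V = Σ_i λ_i v_i v_iᵀ` is a spectral decomposition of the
real symmetric matrix `V` (with orthonormal eigenbasis `v_i`), then
`V₊ = Σ_i max(λ_i, 0) v_i v_iᵀ` is positive semidefinite and is the unique
minimizer of `X ↦ ‖X − V‖_F` over symmetric PSD matrices, where
`‖A‖_F = √tr(Aᵀ A)`. -/
theorem psd_projection_positive_spectral_part {n : ℕ}
    (V : Matrix (Fin n) (Fin n) ℝ) (hV : V.IsSymm)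
    (lam : Fin n → ℝ) (v : Fin n → (Fin n → ℝ))
    (horth : ∀ i j, v i ⬝ᵥ v j = if i = j then (1 : ℝ) else 0)
    (hdecomp : V = ∑ i, lam i • Matrix.vecMulVec (v i) (v i))
    (Vplus : Matrix (Fin n) (Fin n) ℝ)
    (hVplus : Vplus = ∑ i, max (lam i) 0 • Matrix.vecMulVec (v i) (v i)) :
    Vplus.PosSemidef ∧
      ∀ X : Matrix (Fin n) (Fin n) ℝ, X.PosSemidef → X ≠ Vplus →
        Real.sqrt (Matrix.trace ((Vplus - V)ᵀ * (Vplus - V))) <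
          Real.sqrt (Matrix.trace ((X - V)ᵀ * (X - V))) :=
  psd_projection_positive_spectral_part_general V lam v horth hdecomp Vplus hVplus
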